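/- Suppose the pair (C,p) is welfare-optimal, i.e., W(M(C,p)) ≥ W(M(C',p')) for every integer C' ≥ 1 and every p' ≥ 0, and suppose q := Pr_{V∼F}[ d_V(p) ≥ C ] > 0. Then there exists an integer C' ≥ 1 such that (1 + 2/q)·W(M(C')) ≥ W(M(C,p)), where M(C') is the safe-price auction with cap C'. (No independence assumption across firms is needed: the statement is about an arbitrary distribution F over valuation curves.) -/

import Mathlib

/-!
Write `c j = Q j - Q (j - 1)` and `r = Q C / C`. Welfare splits into per-license terms
`E[1{v j ≥ p} (v j - c j)]`, `j ≤ C`. Put `S = ∑ E[(v j - r)⁺]` and `D = ∑ (c j - r)⁺`, the latter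
equal to `∑ (r - c j)⁺` because the `c j` average to `r`. The safe-price auction earns at least `S`,
since by convexity the licenses it sells are the cheapest ones, whose costs average at most `r`.
The floor-`p` auction earns at most `S + (1 - q) D`, because with probability `q` it sells all `C`
licenses, the expensive ones included. Comparing with the cap `k` at which `c` crosses `r` shows
that the expensive licenses pay off: `q D ≤ S`. Hence `q W(M(C,p)) ≤ S ≤ W(M(C))`.
-/

open MeasureTheory ProbabilityTheory

noncomputable section

/-- The marginal value of the `j`-th license under the curve `V`. -/
def marg (V : ℕ → ℝ) (j : ℕ) : ℝ := V j - V (j - 1)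

/-- A valuation curve: `V 0 = 0`, nondecreasing, nonincreasing marginal values,
and only finitely many nonzero marginal values. -/
def IsValuation (V : ℕ → ℝ) : Prop :=
  V 0 = 0 ∧ Monotone V ∧ (∀ j : ℕ, 1 ≤ j → marg V (j + 1) ≤ marg V j) ∧
    ∃ N : ℕ, ∀ j : ℕ, N ≤ j → marg V j = 0

/-- A social cost function: `Q 0 = 0`, nondecreasing, and (discretely) convex. -/
def IsCost (Q : ℕ → ℝ) : Prop :=
  Q 0 = 0 ∧ Monotone Q ∧ ∀ x : ℕ, 1 ≤ x → Q x - Q (x - 1) ≤ Q (x + 1) - Q x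

/-- The demand of a valuation curve at price `p`:
`sup { j ≥ 1 : marg V j ≥ p } ∈ ℕ ∪ {∞}` (with `sup ∅ = 0`). -/
def dem (V : ℕ → ℝ) (p : ℝ) : ℕ∞ :=
  sSup {j : ℕ∞ | ∃ k : ℕ, j = (k : ℕ∞) ∧ 1 ≤ k ∧ p ≤ marg V k}

/-- Number of licenses sold to curve `V` under cap `C` (possibly `∞`) and price floor `p`. -/
def sold (C : ℕ∞) (p : ℝ) (V : ℕ → ℝ) : ℕ := (min C (dem V p)).toNat

/-- The safe price for cap `C`: the average social cost `Q C / C` per license. -/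
def safeP (Q : ℕ → ℝ) (C : ℕ) : ℝ := Q C / C

/-- Truth-telling expected welfare of the no-ceiling cap-and-price auction `M(C,p)`
for a distribution `F` over (combined) valuation curves. -/
def Wfl (F : Measure (ℕ → ℝ)) (Q : ℕ → ℝ) (C : ℕ∞) (p : ℝ) : ℝ :=
  ∫ V, (V (sold C p V) - Q (sold C p V)) ∂F

/-- Number of licenses sold under cap `C`, price floor `p`, and price ceiling `pbar`. -/
def xceil (C : ℕ) (p pbar : ℝ) (V : ℕ → ℝ) : ℕ :=
  if (C : ℕ∞) ≤ dem V pbar then (dem V pbar).toNat else sold (C : ℕ∞) p V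

/-- Truth-telling expected welfare of the cap-and-price auction `M(C,p,pbar)`. -/
def Wceil (F : Measure (ℕ → ℝ)) (Q : ℕ → ℝ) (C : ℕ) (p pbar : ℝ) : ℝ :=
  ∫ V, (V (xceil C p pbar V) - Q (xceil C p pbar V)) ∂F

/-- The combined valuation curve of a profile of valuation curves. -/
def comb {n : ℕ} (Vp : Fin n → ℕ → ℝ) (x : ℕ) : ℝ :=
  sSup {s : ℝ | ∃ y : Fin n → ℕ, (∑ i, y i) = x ∧ s = ∑ i, Vp i (y i)}

open Classical in
/-- Product of a family of probability measures (0 if the family fails to consist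
of probability measures). -/
def piProb {ι : Type*} [Fintype ι] {α : ι → Type*} [∀ i, MeasurableSpace (α i)]
    (μ : ∀ i, Measure (α i)) : Measure (∀ i, α i) :=
  if h : ∀ i, IsProbabilityMeasure (μ i) then
    haveI := h
    Measure.pi μ
  else 0

/-- Truth-telling expected welfare of `M(C,p)` for independent firms with
valuation distributions `F i`, computed via the combined valuation curve. -/
def Wcomb {n : ℕ} (F : Fin n → Measure (ℕ → ℝ)) (Q : ℕ → ℝ) (C : ℕ∞) (p : ℝ) : ℝ :=
  ∫ Vp, (comb Vp (sold C p (comb Vp)) - Q (sold C p (comb Vp))) ∂(piProb F)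

/-- Truth-telling expected welfare of `M(C,p,pbar)` for independent firms. -/
def WceilComb {n : ℕ} (F : Fin n → Measure (ℕ → ℝ)) (Q : ℕ → ℝ) (C : ℕ) (p pbar : ℝ) : ℝ :=
  ∫ Vp, (comb Vp (xceil C p pbar (comb Vp)) - Q (xceil C p pbar (comb Vp))) ∂(piProb F)

/-- `W^{(1)}`: the expected optimal welfare from allocating licenses to a single firm. -/
def W1 {n : ℕ} (F : Fin n → Measure (ℕ → ℝ)) (Q : ℕ → ℝ) : ℝ :=
  ∫ Vp, sSup {w : ℝ | ∃ (i : Fin n) (x : ℕ), w = Vp i x - Q x} ∂(piProb F)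

/-- The per-license price in the uniform-price auction with cap `C` and floor `pf`,
given a bid profile `b`. -/
def priceOf {n : ℕ} (C : ℕ) (pf : ℝ) (b : Fin n → ℕ → ℝ) : ℝ :=
  if (∑ i, dem (b i) pf) < (C : ℕ∞) then pf else comb b C - comb b (C - 1)

/-- A (measurable) tie-breaking allocation rule for the uniform-price auction with
cap `C` and price floor `pf`. -/
def IsAllocRule {n : ℕ} (C : ℕ) (pf : ℝ) (alloc : (Fin n → ℕ → ℝ) → Fin n → ℕ) : Prop :=
  Measurable alloc ∧
    ∀ b : Fin n → ℕ → ℝ, (∀ i, IsValuation (b i)) →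
      (((∑ i, dem (b i) pf) < (C : ℕ∞)) → ∀ i, alloc b i = (dem (b i) pf).toNat) ∧
      (((C : ℕ∞) ≤ ∑ i, dem (b i) pf) →
        (∑ i, alloc b i) = C ∧
          ∀ y : Fin n → ℕ, (∑ i, y i) = C → (∑ i, b i (y i)) ≤ ∑ i, b i (alloc b i))

/-- The strategy `σi` never overbids: with probability one the bid is a valuation
curve pointwise below the true valuation. -/
def NoOverbid (σi : Kernel (ℕ → ℝ) (ℕ → ℝ)) : Prop :=
  ∀ V : ℕ → ℝ, IsValuation V → σi V {B | IsValuation B ∧ ∀ x, B x ≤ V x} = 1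

/-- Expected welfare when the firms play the (randomized) strategy profile `σ`. -/
def EqWelfare {n : ℕ} (F : Fin n → Measure (ℕ → ℝ)) (σ : Fin n → Kernel (ℕ → ℝ) (ℕ → ℝ))
    (alloc : (Fin n → ℕ → ℝ) → Fin n → ℕ) (Q : ℕ → ℝ) : ℝ :=
  ∫ Vp, (∫ b, ((∑ i, Vp i (alloc b i)) - Q (∑ i, alloc b i))
      ∂(piProb fun j => σ j (Vp j))) ∂(piProb F)

/-- Expected utility of firm `i` with valuation `Vi` when every firm plays `σ`. -/
def EUeq {n : ℕ} (F : Fin n → Measure (ℕ → ℝ)) (σ : Fin n → Kernel (ℕ → ℝ) (ℕ → ℝ))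
    (alloc : (Fin n → ℕ → ℝ) → Fin n → ℕ) (C : ℕ) (pf : ℝ) (i : Fin n) (Vi : ℕ → ℝ) : ℝ :=
  ∫ Vp, (∫ b, (Vi (alloc b i) - priceOf C pf b * (alloc b i : ℝ))
      ∂(piProb fun j => σ j (Function.update Vp i Vi j))) ∂(piProb F)

/-- Expected utility of firm `i` with valuation `Vi` deviating to the fixed bid `Bt`
while the others play `σ`. -/
def EUdev {n : ℕ} (F : Fin n → Measure (ℕ → ℝ)) (σ : Fin n → Kernel (ℕ → ℝ) (ℕ → ℝ))
    (alloc : (Fin n → ℕ → ℝ) → Fin n → ℕ) (C : ℕ) (pf : ℝ) (i : Fin n) (Vi Bt : ℕ → ℝ) : ℝ :=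
  ∫ Vp, (∫ b, (Vi (alloc b i) - priceOf C pf b * (alloc b i : ℝ))
      ∂(piProb fun j => if j = i then Measure.dirac Bt else σ j (Vp j))) ∂(piProb F)

/-- Bayes–Nash equilibrium of the uniform-price auction with cap `C` and floor `pf`. -/
def IsBNE {n : ℕ} (F : Fin n → Measure (ℕ → ℝ)) (σ : Fin n → Kernel (ℕ → ℝ) (ℕ → ℝ))
    (alloc : (Fin n → ℕ → ℝ) → Fin n → ℕ) (C : ℕ) (pf : ℝ) : Prop :=
  ∀ (i : Fin n) (Vi : ℕ → ℝ), IsValuation Vi → ∀ Bt : ℕ → ℝ, IsValuation Bt →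
    EUdev F σ alloc C pf i Vi Bt ≤ EUeq F σ alloc C pf i Vi

/-- `θ_V = min( d_V(p), d_V(P(C)) )`, as a natural number. -/
def thetaN (Q : ℕ → ℝ) (C : ℕ) (p : ℝ) (V : ℕ → ℝ) : ℕ :=
  (min (dem V p) (dem V (safeP Q C))).toNat

open Finset

lemma IsValuation.marg_antitone {V : ℕ → ℝ} (hV : IsValuation V) {i j : ℕ} (hi : 0 < i)
    (hij : i ≤ j) : marg V j ≤ marg V i := by
  induction j, hij using Nat.le_induction with
  | base => exact le_rfl
  | succ k hik ih => exact (hV.2.2.1 k (hi.trans_le hik)).trans ih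

lemma IsCost.marg_mono {Q : ℕ → ℝ} (hQ : IsCost Q) {i j : ℕ} (hi : 0 < i) (hij : i ≤ j) :
    marg Q i ≤ marg Q j := by
  induction j, hij using Nat.le_induction with
  | base => exact le_rfl
  | succ k hik ih =>
    refine ih.trans ?_
    simpa only [marg, Nat.add_sub_cancel] using hQ.2.2 k (hi.trans_le hik)

lemma sum_marg_Ioc {f : ℕ → ℝ} (hf : f 0 = 0) (k : ℕ) : ∑ j ∈ Ioc 0 k, marg f j = f k := by
  induction k with
  | zero => simpa using hf.symm
  | succ k ih => rw [sum_Ioc_succ_top k.zero_le, ih, marg, Nat.add_sub_cancel, add_sub_cancel]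

lemma IsValuation.le_dem_iff {V : ℕ → ℝ} (hV : IsValuation V) {j : ℕ} (hj : 0 < j) (x : ℝ) :
    (j : ℕ∞) ≤ dem V x ↔ x ≤ marg V j := by
  refine ⟨fun h => ?_, fun h => le_sSup ⟨j, rfl, hj, h⟩⟩
  by_contra hx
  have hdem : dem V x ≤ ((j - 1 : ℕ) : ℕ∞) := by
    refine sSup_le ?_
    rintro _ ⟨k, rfl, hk, hxk⟩
    have : k < j := lt_of_not_ge fun hjk => hx (hxk.trans (hV.marg_antitone hj hjk))
    exact_mod_cast Nat.le_sub_one_of_lt this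
  have : j ≤ j - 1 := by exact_mod_cast h.trans hdem
  omega

lemma sold_le (C : ℕ) (x : ℝ) (V : ℕ → ℝ) : sold C x V ≤ C := by
  unfold sold
  simpa using ENat.toNat_le_toNat (min_le_left (C : ℕ∞) (dem V x)) (ENat.natCast_ne_top C)

lemma IsValuation.le_sold_iff {V : ℕ → ℝ} (hV : IsValuation V) {j C : ℕ} (hj : 0 < j)
    (hjC : j ≤ C) (x : ℝ) : j ≤ sold C x V ↔ x ≤ marg V j := by
  have hcoe : ((sold C x V : ℕ) : ℕ∞) = min (C : ℕ∞) (dem V x) :=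
    ENat.natCast_toNat (ne_top_of_le_ne_top (ENat.natCast_ne_top C) (min_le_left _ _))
  rw [← hV.le_dem_iff hj, ← Nat.cast_le (α := ℕ∞), hcoe, le_min_iff]
  exact and_iff_right (by exact_mod_cast hjC)

lemma IsValuation.filter_le_marg_eq {V : ℕ → ℝ} (hV : IsValuation V) (C : ℕ) (x : ℝ) :
    (Ioc 0 C).filter (fun j => x ≤ marg V j) = Ioc 0 (sold C x V) := by
  ext j
  simp only [mem_filter, mem_Ioc]
  constructor
  · rintro ⟨⟨hj, hjC⟩, hx⟩
    exact ⟨hj, (hV.le_sold_iff hj hjC x).2 hx⟩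
  · rintro ⟨hj, hjs⟩
    have hjC := hjs.trans (sold_le C x V)
    exact ⟨⟨hj, hjC⟩, (hV.le_sold_iff hj hjC x).1 hjs⟩

lemma sum_Ioc_nonneg_of_antitone_of_sum_eq_zero {a : ℕ → ℝ} {C n : ℕ}
    (ha : ∀ i j, 0 < i → i ≤ j → j ≤ C → a j ≤ a i) (hsum : ∑ j ∈ Ioc 0 C, a j = 0)
    (hn : n ≤ C) : 0 ≤ ∑ j ∈ Ioc 0 n, a j := by
  rcases n.eq_zero_or_pos with rfl | hn0
  · simp
  rcases le_or_gt 0 (a n) with han | han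
  · exact sum_nonneg fun j hj => han.trans (ha j n (mem_Ioc.1 hj).1 (mem_Ioc.1 hj).2 hn)
  · have htail : ∑ j ∈ Ioc n C, a j ≤ 0 := sum_nonpos fun j hj =>
      ((ha n j hn0 (mem_Ioc.1 hj).1.le (mem_Ioc.1 hj).2)).trans han.le
    linarith [sum_Ioc_consecutive a n.zero_le hn]

def licenseGain (Q : ℕ → ℝ) (x : ℝ) (j : ℕ) : (ℕ → ℝ) → ℝ :=
  {V | x ≤ marg V j}.indicator fun V => marg V j - marg Q j

lemma IsValuation.welfare_sold_eq_sum {V Q : ℕ → ℝ} (hV : IsValuation V) (hQ0 : Q 0 = 0)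
    (C : ℕ) (x : ℝ) :
    V (sold C x V) - Q (sold C x V) = ∑ j ∈ Ioc 0 C, licenseGain Q x j V := by
  simp only [licenseGain, Set.indicator_apply, Set.mem_ofPred_eq]
  rw [← sum_filter, hV.filter_le_marg_eq, sum_sub_distrib, sum_marg_Ioc hV.1, sum_marg_Ioc hQ0]

lemma sum_marg_sub_safeP {Q : ℕ → ℝ} (hQ0 : Q 0 = 0) {C : ℕ} (hC : 0 < C) :
    ∑ j ∈ Ioc 0 C, (marg Q j - safeP Q C) = 0 := by
  rw [sum_sub_distrib, sum_marg_Ioc hQ0, sum_const, Nat.card_Ioc, safeP, nsmul_eq_mul,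
    Nat.sub_zero, mul_div_cancel₀ _ (by exact_mod_cast hC.ne'), sub_self]

lemma IsCost.exists_crossover {Q : ℕ → ℝ} (hQ : IsCost Q) {C : ℕ} (hC : 0 < C) :
    ∃ k, 0 < k ∧ k ≤ C ∧ (∀ j ∈ Ioc 0 k, marg Q j ≤ safeP Q C) ∧
      ∀ j ∈ Ioc k C, safeP Q C < marg Q j := by
  set P := fun j => marg Q j ≤ safeP Q C
  set k := Nat.findGreatest P C
  have hfirst : marg Q 1 ≤ safeP Q C := by
    by_contra! h
    have := sum_pos (fun j hj => sub_pos.2 (h.trans_le (hQ.marg_mono one_pos (mem_Ioc.1 hj).1)))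
      (nonempty_Ioc.2 hC)
    exact this.ne' (sum_marg_sub_safeP hQ.1 hC)
  have hk : 0 < k := Nat.le_findGreatest hC hfirst
  refine ⟨k, hk, Nat.findGreatest_le C, fun j hj => ?_, fun j hj => ?_⟩
  · exact (hQ.marg_mono (mem_Ioc.1 hj).1 (mem_Ioc.1 hj).2).trans
      (Nat.findGreatest_spec (P := P) hC hfirst)
  · exact lt_of_not_ge (Nat.findGreatest_is_greatest (mem_Ioc.1 hj).1 (mem_Ioc.1 hj).2)

lemma IsValuation.sum_posPart_le_welfare_safeP {V Q : ℕ → ℝ} (hV : IsValuation V)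
    (hQ : IsCost Q) {C : ℕ} (hC : 0 < C) :
    ∑ j ∈ Ioc 0 C, (marg V j - safeP Q C)⁺ ≤
      V (sold C (safeP Q C) V) - Q (sold C (safeP Q C) V) := by
  set r := safeP Q C
  set s := sold C r V
  have hpos : ∑ j ∈ Ioc 0 C, (marg V j - r)⁺ = ∑ j ∈ Ioc 0 s, (marg V j - r) := by
    rw [← hV.filter_le_marg_eq, sum_filter]
    exact sum_congr rfl fun j _ => by simp only [posPart_eq_ite, sub_nonneg]
  have hcheap : 0 ≤ ∑ j ∈ Ioc 0 s, (r - marg Q j) := by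
    refine sum_Ioc_nonneg_of_antitone_of_sum_eq_zero (fun i j hi hij _ => ?_) ?_ (sold_le C r V)
    · linarith [hQ.marg_mono hi hij]
    · rw [← neg_eq_zero, ← sum_neg_distrib, ← sum_marg_sub_safeP hQ.1 hC]
      exact sum_congr rfl fun j _ => neg_sub _ _
  calc ∑ j ∈ Ioc 0 C, (marg V j - r)⁺
      ≤ ∑ j ∈ Ioc 0 s, (marg V j - r) + ∑ j ∈ Ioc 0 s, (r - marg Q j) := by linarith
    _ = V s - Q s := by
      rw [← sum_add_distrib, ← sum_marg_Ioc hV.1 s, ← sum_marg_Ioc hQ.1 s, ← sum_sub_distrib]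
      exact sum_congr rfl fun j _ => by ring

lemma licenseGain_le {Q V : ℕ → ℝ} {A : Set (ℕ → ℝ)} {p : ℝ} {j : ℕ}
    (hA : V ∈ A → p ≤ marg V j) (r : ℝ) :
    licenseGain Q p j V ≤
      (marg V j - r)⁺ + (marg Q j - r)⁻ - A.indicator (fun _ => (marg Q j - r)⁺) V := by
  have hv := le_posPart (marg V j - r)
  have hc := posPart_sub_negPart (marg Q j - r)
  unfold licenseGain
  by_cases hVA : V ∈ A
  · rw [Set.indicator_of_mem (s := {V | p ≤ marg V j}) (hA hVA), Set.indicator_of_mem hVA]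
    linarith
  · rw [Set.indicator_of_notMem hVA, Set.indicator_apply]
    split_ifs
    · linarith [neg_le_negPart (marg Q j - r)]
    · linarith [posPart_nonneg (marg V j - r), negPart_nonneg (marg Q j - r)]

section Expectation

variable {F : Measure (ℕ → ℝ)} {Q : ℕ → ℝ}

lemma measurableSet_setOf_isValuation : MeasurableSet {V : ℕ → ℝ | IsValuation V} := by
  simp only [IsValuation, marg, Monotone]
  measurability

lemma ae_isValuation [IsProbabilityMeasure F]
    (hval : F {V | IsValuation V} = 1) : ∀ᵐ V ∂F, IsValuation V :=
  (ae_iff_measure_eq measurableSet_setOf_isValuation.nullMeasurableSet).2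
    (by rw [hval, measure_univ])

lemma integrable_marg (hint : ∀ x : ℕ, Integrable (fun V : ℕ → ℝ => V x) F) (j : ℕ) :
    Integrable (fun V : ℕ → ℝ => marg V j) F :=
  (hint j).sub (hint (j - 1))

lemma measurable_marg (j : ℕ) : Measurable fun V : ℕ → ℝ => marg V j :=
  (measurable_pi_apply j).sub (measurable_pi_apply (j - 1))

lemma integrable_licenseGain [IsFiniteMeasure F]
    (hint : ∀ x : ℕ, Integrable (fun V : ℕ → ℝ => V x) F) (Q : ℕ → ℝ) (x : ℝ) (j : ℕ) :
    Integrable (licenseGain Q x j) F :=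
  ((integrable_marg hint j).sub (integrable_const _)).indicator
    (measurableSet_le measurable_const (measurable_marg j))

lemma integrable_posPart_marg_sub [IsFiniteMeasure F]
    (hint : ∀ x : ℕ, Integrable (fun V : ℕ → ℝ => V x) F) (j : ℕ) (r : ℝ) :
    Integrable (fun V : ℕ → ℝ => (marg V j - r)⁺) F :=
  ((integrable_marg hint j).sub (integrable_const r)).pos_part

lemma Wfl_eq_integral_sum (hF : ∀ᵐ V ∂F, IsValuation V) (hQ0 : Q 0 = 0) (C : ℕ) (x : ℝ) :
    Wfl F Q C x = ∫ V, ∑ j ∈ Ioc 0 C, licenseGain Q x j V ∂F :=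
  integral_congr_ae (hF.mono fun _ hV => hV.welfare_sold_eq_sum hQ0 C x)

lemma Wfl_eq_sum [IsFiniteMeasure F] (hF : ∀ᵐ V ∂F, IsValuation V)
    (hint : ∀ x : ℕ, Integrable (fun V : ℕ → ℝ => V x) F) (hQ0 : Q 0 = 0) (C : ℕ) (x : ℝ) :
    Wfl F Q C x = ∑ j ∈ Ioc 0 C, ∫ V, licenseGain Q x j V ∂F := by
  rw [Wfl_eq_integral_sum hF hQ0,
    integral_finsetSum _ fun j _ => integrable_licenseGain hint Q x j]

lemma integral_licenseGain_le [IsProbabilityMeasure F] (hF : ∀ᵐ V ∂F, IsValuation V)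
    (hint : ∀ x : ℕ, Integrable (fun V : ℕ → ℝ => V x) F) {p : ℝ} {j C : ℕ} (hj : 0 < j)
    (hjC : j ≤ C) (r : ℝ) :
    ∫ V, licenseGain Q p j V ∂F ≤
      ∫ V, (marg V j - r)⁺ ∂F + (marg Q j - r)⁻ -
        F.real {V | p ≤ marg V C} * (marg Q j - r)⁺ := by
  set A := {V : ℕ → ℝ | p ≤ marg V C}
  have hA : MeasurableSet A := measurableSet_le measurable_const (measurable_marg C)
  have hpos := integrable_posPart_marg_sub hint j r
  have hsum : Integrable (fun V : ℕ → ℝ => (marg V j - r)⁺ + (marg Q j - r)⁻) F :=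
    hpos.add (integrable_const _)
  have hind : Integrable (A.indicator fun _ => (marg Q j - r)⁺) F :=
    (integrable_const _).indicator hA
  calc ∫ V, licenseGain Q p j V ∂F
      ≤ ∫ V, ((marg V j - r)⁺ + (marg Q j - r)⁻ - A.indicator (fun _ => (marg Q j - r)⁺) V) ∂F :=
        integral_mono_ae (integrable_licenseGain hint Q p j)
          (hsum.sub hind)
          (hF.mono fun V hV => licenseGain_le (fun hVA => hVA.trans (hV.marg_antitone hj hjC)) r)
    _ = _ := by
      rw [integral_sub hsum hind,
        integral_add hpos (integrable_const _), integral_const, integral_indicator_const _ hA]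
      simp

lemma Wfl_le_sum_posPart [IsProbabilityMeasure F] (hF : ∀ᵐ V ∂F, IsValuation V)
    (hint : ∀ x : ℕ, Integrable (fun V : ℕ → ℝ => V x) F) (hQ : IsCost Q) {C : ℕ} (hC : 0 < C)
    (p : ℝ) :
    Wfl F Q C p ≤ ∑ j ∈ Ioc 0 C, ∫ V, (marg V j - safeP Q C)⁺ ∂F +
      (1 - F.real {V | p ≤ marg V C}) * ∑ j ∈ Ioc 0 C, (marg Q j - safeP Q C)⁺ := by
  set r := safeP Q C
  have hneg : ∑ j ∈ Ioc 0 C, (marg Q j - r)⁻ = ∑ j ∈ Ioc 0 C, (marg Q j - r)⁺ := by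
    have h := sum_marg_sub_safeP hQ.1 hC
    rw [← sum_congr rfl fun j _ => posPart_sub_negPart (marg Q j - r), sum_sub_distrib] at h
    linarith
  rw [Wfl_eq_sum hF hint hQ.1]
  calc _ ≤ ∑ j ∈ Ioc 0 C, (∫ V, (marg V j - r)⁺ ∂F + (marg Q j - r)⁻ -
          F.real {V | p ≤ marg V C} * (marg Q j - r)⁺) :=
        sum_le_sum fun j hj => integral_licenseGain_le hF hint (mem_Ioc.1 hj).1 (mem_Ioc.1 hj).2 r
    _ = _ := by rw [sum_sub_distrib, sum_add_distrib, hneg, ← mul_sum]; ring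

lemma mul_sum_posPart_le_of_Wfl_le [IsProbabilityMeasure F] (hF : ∀ᵐ V ∂F, IsValuation V)
    (hint : ∀ x : ℕ, Integrable (fun V : ℕ → ℝ => V x) F) (hQ : IsCost Q) {C : ℕ} (hC : 0 < C)
    {p : ℝ} (hopt : ∀ k, 0 < k → k ≤ C → Wfl F Q k p ≤ Wfl F Q C p) :
    F.real {V | p ≤ marg V C} * ∑ j ∈ Ioc 0 C, (marg Q j - safeP Q C)⁺ ≤
      ∑ j ∈ Ioc 0 C, ∫ V, (marg V j - safeP Q C)⁺ ∂F := by
  obtain ⟨k, hk, hkC, hhead, htail⟩ := hQ.exists_crossover hC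
  set r := safeP Q C
  have hgain : 0 ≤ ∑ j ∈ Ioc k C, ∫ V, licenseGain Q p j V ∂F := by
    have h := hopt k hk hkC
    rw [Wfl_eq_sum hF hint hQ.1, Wfl_eq_sum hF hint hQ.1,
      ← sum_Ioc_consecutive _ k.zero_le hkC] at h
    linarith
  have hbound : ∑ j ∈ Ioc k C, ∫ V, licenseGain Q p j V ∂F ≤
      ∑ j ∈ Ioc k C, ∫ V, (marg V j - r)⁺ ∂F -
        F.real {V | p ≤ marg V C} * ∑ j ∈ Ioc k C, (marg Q j - r)⁺ := by
    rw [mul_sum, ← sum_sub_distrib]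
    refine sum_le_sum fun j hj => ?_
    have h := integral_licenseGain_le (Q := Q) (p := p) hF hint (hk.trans (mem_Ioc.1 hj).1)
      (mem_Ioc.1 hj).2 r
    rwa [negPart_eq_zero.2 (sub_nonneg.2 (htail j hj).le), add_zero] at h
  have hcost : ∑ j ∈ Ioc k C, (marg Q j - r)⁺ = ∑ j ∈ Ioc 0 C, (marg Q j - r)⁺ := by
    rw [← sum_Ioc_consecutive _ k.zero_le hkC,
      sum_eq_zero fun j hj => posPart_eq_zero.2 (sub_nonpos.2 (hhead j hj)), zero_add]
  have hvalue : ∑ j ∈ Ioc k C, ∫ V, (marg V j - r)⁺ ∂F ≤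
      ∑ j ∈ Ioc 0 C, ∫ V, (marg V j - r)⁺ ∂F :=
    sum_le_sum_of_subset_of_nonneg (Ioc_subset_Ioc_left k.zero_le)
      fun j _ _ => integral_nonneg fun V => posPart_nonneg _
  rw [hcost] at hbound
  linarith

lemma sum_integral_posPart_le_Wfl_safeP [IsProbabilityMeasure F] (hF : ∀ᵐ V ∂F, IsValuation V)
    (hint : ∀ x : ℕ, Integrable (fun V : ℕ → ℝ => V x) F) (hQ : IsCost Q) {C : ℕ} (hC : 0 < C) :
    ∑ j ∈ Ioc 0 C, ∫ V, (marg V j - safeP Q C)⁺ ∂F ≤ Wfl F Q C (safeP Q C) := by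
  rw [← integral_finsetSum _ fun j _ => integrable_posPart_marg_sub hint j _,
    Wfl_eq_integral_sum hF hQ.1]
  refine integral_mono_ae (integrable_finsetSum _ fun j _ => integrable_posPart_marg_sub hint j _)
    (integrable_finsetSum _ fun j _ => integrable_licenseGain hint Q _ j) (hF.mono fun V hV => ?_)
  dsimp only
  rw [← hV.welfare_sold_eq_sum hQ.1]
  exact hV.sum_posPart_le_welfare_safeP hQ hC

end Expectation

/-- If `(C,p)` is welfare-optimal and `q = Pr[d_V(p) ≥ C] > 0`, then
some safe-price auction `M(C')` satisfies `(1 + 2/q)·W(M(C')) ≥ W(M(C,p))`. -/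
theorem stmt4 (F : Measure (ℕ → ℝ)) (hprob : IsProbabilityMeasure F)
    (hval : F {V | IsValuation V} = 1)
    (hint : ∀ x : ℕ, Integrable (fun V : ℕ → ℝ => V x) F)
    (Q : ℕ → ℝ) (hQ : IsCost Q)
    (C : ℕ) (p : ℝ) (hC : 1 ≤ C) (hp : 0 ≤ p)
    (hopt : ∀ (C' : ℕ) (p' : ℝ), 1 ≤ C' → 0 ≤ p' →
      Wfl F Q (C' : ℕ∞) p' ≤ Wfl F Q (C : ℕ∞) p)
    (hq : 0 < (F {V | (C : ℕ∞) ≤ dem V p}).toReal) :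
    ∃ C' : ℕ, 1 ≤ C' ∧
      Wfl F Q (C : ℕ∞) p ≤
        (1 + 2 / (F {V | (C : ℕ∞) ≤ dem V p}).toReal) *
          Wfl F Q (C' : ℕ∞) (safeP Q C') := by
  have hF := ae_isValuation hval
  have hA : F {V | (C : ℕ∞) ≤ dem V p} = F {V | p ≤ marg V C} :=
    measure_congr (Filter.eventuallyEq_set.2 (hF.mono fun V hV => hV.le_dem_iff hC p))
  rw [hA, ← measureReal_def] at hq ⊢
  set q := F.real {V | p ≤ marg V C}
  set S := ∑ j ∈ Ioc 0 C, ∫ V, (marg V j - safeP Q C)⁺ ∂F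
  set D := ∑ j ∈ Ioc 0 C, (marg Q j - safeP Q C)⁺
  have hsafe : S ≤ Wfl F Q C (safeP Q C) := sum_integral_posPart_le_Wfl_safeP hF hint hQ hC
  have hfloor : Wfl F Q C p ≤ S + (1 - q) * D := Wfl_le_sum_posPart hF hint hQ hC p
  have hcap : q * D ≤ S := mul_sum_posPart_le_of_Wfl_le hF hint hQ hC fun k hk _ => hopt k p hk hp
  have hq1 : q ≤ 1 := measureReal_le_one
  have hS : 0 ≤ S := sum_nonneg fun j _ => integral_nonneg fun V => posPart_nonneg _
  -- `q W ≤ q S + (1 - q) q D ≤ S`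
  have hqW : q * Wfl F Q C p ≤ S := by nlinarith
  refine ⟨C, hC, ?_⟩
  calc Wfl F Q C p ≤ Wfl F Q C (safeP Q C) / q := by rw [le_div_iff₀ hq]; linarith
    _ ≤ (1 + 2 / q) * Wfl F Q C (safeP Q C) := by
      rw [div_eq_inv_mul, div_eq_mul_inv]
      exact mul_le_mul_of_nonneg_right (by linarith [inv_pos.2 hq]) (hS.trans hsafe)

end
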